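/- arXiv:0711.2000 — 2 statements merged into one kernel-verified Lean document; each statement's English description precedes it below -/
import Mathlib

section
/- Let Q : ℝ → L(X) be a family of bounded linear operators with Q(t+1) = Q(t) for all t and t ↦ Q(t)x continuous for each x ∈ X, and let 𝓠 denote the operator of multiplication by Q(t) on BC(ℝ,X), (𝓠g)(t) = Q(t)g(t). Then for every g ∈ BC(ℝ,X) the circular spectrum satisfies σ(𝓠g) ⊂ σ(g). -/
open MeasureTheory Complex Metric BoundedContinuousFunction

noncomputable section

/-- The space `L^∞(ℝ, X)` of (classes of) essentially bounded strongly measurable functions. -/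
abbrev Linf (X : Type*) [NormedAddCommGroup X] : Type _ := Lp X ⊤ (volume : Measure ℝ)

variable (X : Type*) [NormedAddCommGroup X] [NormedSpace ℂ X] [CompleteSpace X]

/-- The translation operator `S` on `L^∞(ℝ,X)`, `(S g)(t) = g (t + 1)`. -/
def transOp : Linf X →L[ℂ] Linf X :=
  (Lp.compMeasurePreservingₗᵢ ℂ (fun t : ℝ => t + 1)
    (measurePreserving_add_right volume 1)).toContinuousLinearMap

/-- The circular spectrum of `g ∈ L^∞(ℝ,X)`: the set of points `ξ₀` of the unit circle `Γ`
such that `λ ↦ R(λ,S) g` admits no analytic extension to any neighborhood of `ξ₀`. -/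
def circSpec (g : Linf X) : Set ℂ :=
  {ξ | ‖ξ‖ = 1 ∧ ¬∃ (U : Set ℂ) (F : ℂ → Linf X), IsOpen U ∧ ξ ∈ U ∧
    AnalyticOnNhd ℂ F U ∧ ∀ lam ∈ U, ‖lam‖ ≠ 1 → F lam = resolvent (transOp X) lam g}

/-- A bounded continuous function, viewed as an element of `L^∞(ℝ,X)`. -/
def bcToLinf (f : ℝ →ᵇ X) : Linf X :=
  (memLp_top_of_bound f.continuous.aestronglyMeasurable ‖f‖
    (Filter.Eventually.of_forall fun t => f.norm_coe_le_norm t)).toLp f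

/-- Restriction of a continuous linear operator to an invariant submodule. -/
def restrictCLM {E : Type*} [NormedAddCommGroup E] [NormedSpace ℂ E]
    (f : E →L[ℂ] E) (p : Submodule ℂ E) (h : ∀ x ∈ p, f x ∈ p) : p →L[ℂ] p where
  toFun x := ⟨f x, h x x.2⟩
  map_add' x y := by ext; simp
  map_smul' c x := by ext; simp
  cont := Continuous.subtype_mk (f.continuous.comp continuous_subtype_val) _

/-- The translation operator `S` on `BC(ℝ,X)`, `(S g)(t) = g (t + 1)`. -/
def transBC : (ℝ →ᵇ X) →L[ℂ] (ℝ →ᵇ X) :=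
  LinearMap.mkContinuous
    { toFun := fun g => g.compContinuous ⟨fun t => t + 1, by continuity⟩
      map_add' := fun g h => by ext t; simp
      map_smul' := fun c g => by ext t; simp }
    1 (fun g => by
      simpa using g.norm_compContinuous_le ⟨fun t => t + 1, by continuity⟩)

/-- The translation `S(τ)` on `BC(ℝ,X)`, `(S(τ) g)(t) = g (t + τ)`. -/
def translateBC (τ : ℝ) (g : ℝ →ᵇ X) : ℝ →ᵇ X :=
  g.compContinuous ⟨fun t => t + τ, by continuity⟩

/-- A 1-periodic strongly continuous evolutionary process on `X`. -/
structure EvolProcess (X : Type*) [NormedAddCommGroup X] [NormedSpace ℂ X] where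
  U : ℝ → ℝ → X →L[ℂ] X
  idem : ∀ t : ℝ, U t t = ContinuousLinearMap.id ℂ X
  comp : ∀ r s t : ℝ, r ≤ s → s ≤ t → (U t s).comp (U s r) = U t r
  strongCont : ∀ x : X, ContinuousOn (fun p : ℝ × ℝ => U p.1 p.2 x) {p : ℝ × ℝ | p.2 ≤ p.1}
  periodic : ∀ t s : ℝ, U (t + 1) (s + 1) = U t s
  bound : ∃ N ω : ℝ, 0 < N ∧ 0 < ω ∧ ∀ t s : ℝ, s ≤ t → ‖U t s‖ ≤ N * Real.exp (ω * (t - s))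

/-!
Since `Q` is `1`-periodic and strongly continuous, Banach–Steinhaus on `[0, 1]` makes it uniformly
bounded, so multiplication by `Q` is a bounded operator `𝓠` on `L^∞(ℝ, X)` extending the one on
`BC(ℝ, X)`. Periodicity makes `𝓠` commute with the translation `S`, hence with every resolvent
`R(λ, S)`. Thus if `F` is an analytic extension of `λ ↦ R(λ, S) g` near `ξ₀`, then `𝓠 ∘ F` is one
of `λ ↦ R(λ, S) (𝓠 g)`.
-/

theorem Commute.ringInverse_right {M₀ : Type*} [MonoidWithZero M₀] {a b : M₀}
    (h : Commute a b) : Commute a (Ring.inverse b) := by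
  by_cases hb : IsUnit b
  · obtain ⟨u, rfl⟩ := hb
    rw [Ring.inverse_unit]
    exact h.units_inv_right
  · rw [Ring.inverse_non_unit _ hb]
    exact Commute.zero_right a

theorem Commute.resolvent_right {R A : Type*} [CommSemiring R] [Ring A] [Algebra R A]
    {a b : A} (h : Commute b a) (r : R) : Commute b (resolvent a r) :=
  ((Algebra.commute_algebraMap_right r b).sub_right h).ringInverse_right

namespace MeasureTheory

variable {α 𝕜 E F : Type*} {m : MeasurableSpace α} {μ : Measure α} [NontriviallyNormedField 𝕜]
  [NormedAddCommGroup E] [NormedSpace 𝕜 E] [NormedAddCommGroup F] [NormedSpace 𝕜 F]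
  {Q : α → E →L[𝕜] F}

theorem StronglyMeasurable.clm_apply_of_apply (hQ : ∀ x, StronglyMeasurable fun t => Q t x)
    {f : α → E} (hf : StronglyMeasurable f) : StronglyMeasurable fun t => Q t (f t) := by
  have simple (φ : SimpleFunc α E) : StronglyMeasurable fun t => Q t (φ t) := by
    induction φ using SimpleFunc.induction' with
    | const c => exact hQ c
    | @pcw φ ψ s hs hφ hψ =>
      classical
      have hpw : (fun t => Q t (φ.piecewise s hs ψ t))
          = s.piecewise (fun t => Q t (φ t)) (fun t => Q t (ψ t)) := by
        ext t
        by_cases ht : t ∈ s <;> simp [ht]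
      exact hpw ▸ hφ.piecewise hs hψ
  exact stronglyMeasurable_of_tendsto _ (fun n => simple (hf.approx n))
    (tendsto_pi_nhds.mpr fun t => ((Q t).continuous.tendsto _).comp (hf.tendsto_approx t))

theorem AEStronglyMeasurable.clm_apply_of_apply (hQ : ∀ x, StronglyMeasurable fun t => Q t x)
    {f : α → E} (hf : AEStronglyMeasurable f μ) : AEStronglyMeasurable (fun t => Q t (f t)) μ :=
  ⟨fun t => Q t (hf.mk f t), hf.stronglyMeasurable_mk.clm_apply_of_apply hQ,
    by filter_upwards [hf.ae_eq_mk] with t ht using by rw [ht]⟩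

theorem Lp.ae_norm_le_norm_top (f : Lp E ⊤ μ) : ∀ᵐ t ∂μ, ‖f t‖ ≤ ‖f‖ := by
  filter_upwards [ae_le_eLpNormEssSup (f := (f : α → E)) (μ := μ)] with t ht
  rwa [← enorm_le_iff_norm_le, Lp.enorm_def, eLpNorm_exponent_top]

variable {C : NNReal}

theorem ae_norm_clm_apply_le (hC : ∀ t, ‖Q t‖ ≤ C) (f : Lp E ⊤ μ) :
    ∀ᵐ t ∂μ, ‖Q t (f t)‖ ≤ C * ‖f‖ := by
  filter_upwards [Lp.ae_norm_le_norm_top f] with t ht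
  exact (Q t).le_of_opNorm_le_of_le (hC t) ht

theorem memLp_top_clm_apply (hQ : ∀ x, StronglyMeasurable fun t => Q t x)
    (hC : ∀ t, ‖Q t‖ ≤ C) (f : Lp E ⊤ μ) : MemLp (fun t => Q t (f t)) ⊤ μ :=
  memLp_top_of_bound ((Lp.aestronglyMeasurable f).clm_apply_of_apply hQ)
    _ (ae_norm_clm_apply_le hC f)

def Lp.mulOpTop (hQ : ∀ x, StronglyMeasurable fun t => Q t x) (hC : ∀ t, ‖Q t‖ ≤ C) :
    Lp E ⊤ μ →L[𝕜] Lp F ⊤ μ :=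
  LinearMap.mkContinuous
    { toFun := fun f => (memLp_top_clm_apply hQ hC f).toLp _
      map_add' := fun f g => by
        refine Lp.ext ?_
        filter_upwards [MemLp.coeFn_toLp (memLp_top_clm_apply hQ hC (f + g)),
          MemLp.coeFn_toLp (memLp_top_clm_apply hQ hC f),
          MemLp.coeFn_toLp (memLp_top_clm_apply hQ hC g), Lp.coeFn_add f g,
          Lp.coeFn_add ((memLp_top_clm_apply hQ hC f).toLp _)
            ((memLp_top_clm_apply hQ hC g).toLp _)] with t h h₁ h₂ hfg hsum
        simp only [h, hsum, hfg, Pi.add_apply, map_add, h₁, h₂]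
      map_smul' := fun c f => by
        refine Lp.ext ?_
        filter_upwards [MemLp.coeFn_toLp (memLp_top_clm_apply hQ hC (c • f)),
          MemLp.coeFn_toLp (memLp_top_clm_apply hQ hC f), Lp.coeFn_smul c f,
          Lp.coeFn_smul c ((memLp_top_clm_apply hQ hC f).toLp _)] with t h h₁ hcf hsmul
        simp only [RingHom.id_apply, h, hsmul, hcf, Pi.smul_apply, h₁, map_smul] }
    C fun f => by
      rw [LinearMap.coe_mk, AddHom.coe_mk, Lp.norm_toLp, eLpNorm_exponent_top]
      exact ENNReal.toReal_le_of_le_ofReal (by positivity)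
        (eLpNormEssSup_le_of_ae_bound (ae_norm_clm_apply_le hC f))

theorem Lp.coeFn_mulOpTop (hQ : ∀ x, StronglyMeasurable fun t => Q t x) (hC : ∀ t, ‖Q t‖ ≤ C)
    (f : Lp E ⊤ μ) : (Lp.mulOpTop hQ hC f : α → F) =ᵐ[μ] fun t => Q t (f t) :=
  MemLp.coeFn_toLp (memLp_top_clm_apply hQ hC f)

theorem Lp.commute_mulOpTop_compMeasurePreserving {Q : α → E →L[𝕜] E}
    (hQ : ∀ x, StronglyMeasurable fun t => Q t x) (hC : ∀ t, ‖Q t‖ ≤ C) {σ : α → α}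
    (hσ : MeasurePreserving σ μ μ) (hQσ : ∀ t, Q (σ t) = Q t) :
    Commute (Lp.mulOpTop hQ hC : Lp E ⊤ μ →L[𝕜] Lp E ⊤ μ)
      (Lp.compMeasurePreservingₗᵢ 𝕜 σ hσ).toContinuousLinearMap := by
  ext1 f
  rw [mul_apply_eq_comp, mul_apply_eq_comp]
  refine Lp.ext ?_
  filter_upwards [Lp.coeFn_mulOpTop hQ hC (Lp.compMeasurePreserving σ hσ f),
    Lp.coeFn_compMeasurePreserving f hσ,
    Lp.coeFn_compMeasurePreserving (Lp.mulOpTop hQ hC f) hσ,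
    (Lp.coeFn_mulOpTop hQ hC f).comp_tendsto hσ.quasiMeasurePreserving.tendsto_ae]
    with t hMσ hσf hσM hM
  refine hMσ.trans (Eq.trans ?_ hσM.symm)
  rw [hσf, hM, Function.comp_apply, Function.comp_apply, hQσ]

end MeasureTheory

theorem Function.Periodic.exists_forall_norm_le_of_continuous_apply {𝕜 E F : Type*}
    [NontriviallyNormedField 𝕜] [NormedAddCommGroup E] [NormedSpace 𝕜 E] [CompleteSpace E]
    [NormedAddCommGroup F] [NormedSpace 𝕜 F] {Q : ℝ → E →L[𝕜] F} {c : ℝ}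
    (hper : Function.Periodic Q c) (hc : 0 < c) (hQ : ∀ x, Continuous fun t => Q t x) :
    ∃ C : NNReal, ∀ t, ‖Q t‖ ≤ C := by
  obtain ⟨C, hC⟩ := banach_steinhaus (g := fun s : Set.Icc 0 c => Q s) fun x => by
    obtain ⟨C, hC⟩ := isCompact_Icc.exists_bound_of_continuousOn (hQ x).continuousOn
    exact ⟨C, fun s => hC s s.2⟩
  refine ⟨C.toNNReal, fun t => ?_⟩
  obtain ⟨s, hs, hts⟩ := hper.exists_mem_Ico₀ hc t
  exact hts ▸ (hC ⟨s, Set.Ico_subset_Icc_self hs⟩).trans (Real.le_coe_toNNReal C)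

theorem circSpec_apply_subset_of_commute {X : Type*} [NormedAddCommGroup X] [NormedSpace ℂ X]
    {T : Linf X →L[ℂ] Linf X} (hT : Commute T (transOp X))
    (g : Linf X) : circSpec X (T g) ⊆ circSpec X g := by
  rintro ξ ⟨hξ, hnot⟩
  refine ⟨hξ, fun ⟨U, F, hU, hξU, hF, hFg⟩ =>
    hnot ⟨U, T ∘ F, hU, hξU, T.comp_analyticOnNhd hF, fun lam hlam hnorm => ?_⟩⟩
  rw [Function.comp_apply, hFg lam hlam hnorm, ← mul_apply_eq_comp, (hT.resolvent_right lam).eq,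
    mul_apply_eq_comp]

theorem coeFn_bcToLinf {X : Type*} [NormedAddCommGroup X] [NormedSpace ℂ X] [CompleteSpace X]
    (f : ℝ →ᵇ X) : (bcToLinf X f : ℝ → X) =ᵐ[volume] f :=
  MemLp.coeFn_toLp _

/-- for a 1-periodic strongly continuous family `Q(t)` of bounded operators and
`g ∈ BC(ℝ,X)`, the function `(𝓠 g)(t) = Q(t) g(t)` satisfies `σ(𝓠 g) ⊆ σ(g)`. -/
theorem stmt11 (Q : ℝ → X →L[ℂ] X) (hQper : ∀ t : ℝ, Q (t + 1) = Q t)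
    (hQcont : ∀ x : X, Continuous fun t : ℝ => Q t x)
    (g Qg : ℝ →ᵇ X) (hQg : ∀ t : ℝ, Qg t = Q t (g t)) :
    circSpec X (bcToLinf X Qg) ⊆ circSpec X (bcToLinf X g) := by
  obtain ⟨C, hC⟩ := Function.Periodic.exists_forall_norm_le_of_continuous_apply
    (c := 1) hQper one_pos hQcont
  have hQ (x : X) : StronglyMeasurable fun t => Q t x := (hQcont x).stronglyMeasurable
  have hMg : Lp.mulOpTop hQ hC (bcToLinf X g) = bcToLinf X Qg := by
    refine Lp.ext ?_
    filter_upwards [Lp.coeFn_mulOpTop hQ hC _, coeFn_bcToLinf g, coeFn_bcToLinf Qg]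
      with t hM hg hQg'
    rw [hM, hg, hQg', hQg]
  rw [← hMg]
  exact circSpec_apply_subset_of_commute
    (Lp.commute_mulOpTop_compMeasurePreserving hQ hC _ hQper) _

end
end

section
/- Let (U(t,s))_{t≥s} be a 1-periodic strongly continuous evolutionary process on a complex Banach space X and let Λ be a closed subset of the unit circle Γ. Suppose (u_n), (f_n) ⊂ BC(ℝ,X) satisfy σ(u_n) ⊂ Λ and σ(f_n) ⊂ Λ for all n, each u_n is a mild solution with forcing term f_n (i.e. u_n(t) = U(t,s)u_n(s) + ∫_s^t U(t,ξ) f_n(ξ) dξ for all t ≥ s), and u_n → u, f_n → f in the sup norm with u, f ∈ BC(ℝ,X). Then σ(u) ⊂ Λ, σ(f) ⊂ Λ, and u is a mild solution with forcing term f, i.e. u(t) = U(t,s)u(s) + ∫_s^t U(t,ξ) f(ξ) dξ for all t ≥ s. (Equivalently, the restriction of the operator L, defined by Lu = f whenever the mild-solution relation holds, to { g ∈ BC(ℝ,X) : σ(g) ⊂ Λ } is a closed operator.) -/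
/-!
The mild-solution identity passes to uniform limits because both of its sides depend continuously
on `(u, f) ∈ BC(ℝ,X) × BC(ℝ,X)`.

For the spectral condition take `ξ₀ ∈ Γ \ Λ` and a disc around `ξ₀` missing `Λ`, on which every
`λ ↦ R(λ,S) g_n` extends holomorphically. As `S` is a surjective isometry,
`‖R(λ,S) g‖ ≤ ‖g‖ / |‖λ‖ - 1|` off `Γ`; a weighted maximum principle turns this blow-up bound into
a uniform bound `O(‖g‖)` for the extension near `ξ₀`. Applied to `g_m - g_n`, the extensions are
uniformly Cauchy near `ξ₀`, and their holomorphic limit extends `R(λ,S) g`.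
-/

open MeasureTheory Complex Metric BoundedContinuousFunction

noncomputable section

variable (X : Type*) [NormedAddCommGroup X] [NormedSpace ℂ X] [CompleteSpace X]

open Filter Topology

section Isometry

variable {E : Type*} [NormedAddCommGroup E] [NormedSpace ℂ E]

theorem spectrum_subset_sphere_of_isometry [CompleteSpace E] (T : (E →L[ℂ] E)ˣ)
    (hT : ∀ x, ‖(T : E →L[ℂ] E) x‖ = ‖x‖) :
    spectrum ℂ (T : E →L[ℂ] E) ⊆ sphere 0 1 := by
  have hT' : ∀ x, ‖(↑T⁻¹ : E →L[ℂ] E) x‖ = ‖x‖ := fun x => by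
    rw [← hT]
    exact congrArg (‖·‖) (congrArg (· x) T.mul_inv)
  have norm_le_one : ∀ S : E →L[ℂ] E, (∀ x, ‖S x‖ = ‖x‖) → ∀ k ∈ spectrum ℂ S, ‖k‖ ≤ 1 :=
    fun S hS k hk => by
      have hS1 : ‖S‖ * ‖(1 : E →L[ℂ] E)‖ ≤ 1 :=
        mul_le_one₀ (S.opNorm_le_bound zero_le_one fun x => by rw [hS, one_mul])
          (norm_nonneg _) ContinuousLinearMap.norm_id_le
      simpa using (mem_closedBall_zero_iff.mp (spectrum.subset_closedBall_norm_mul S hk)).trans hS1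
  intro k hk
  have hk0 : k ≠ 0 := by
    rintro rfl
    exact spectrum.zero_notMem_iff ℂ |>.mpr T.isUnit hk
  have hinv : k⁻¹ ∈ spectrum ℂ (↑T⁻¹ : E →L[ℂ] E) :=
    (spectrum.inv_mem_iff (r := Units.mk0 k hk0)).mp hk
  have h1 := norm_le_one _ hT k hk
  have h2 := norm_le_one _ hT' _ hinv
  rw [norm_inv, inv_le_one₀ (norm_pos_iff.mpr hk0)] at h2
  simpa using le_antisymm h1 h2

theorem abs_norm_sub_one_mul_norm_resolvent_le {T : E →L[ℂ] E} (hT : ∀ x, ‖T x‖ = ‖x‖) {k : ℂ}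
    (hk : k ∈ resolventSet ℂ T) (g : E) : |‖k‖ - 1| * ‖resolvent T k g‖ ≤ ‖g‖ := by
  set y := resolvent T k g
  have hy : k • y - T y = g := by
    have := congrArg (· g) (Ring.mul_inverse_cancel _ hk)
    simpa [y, resolvent, Algebra.algebraMap_eq_smul_one] using this
  calc |‖k‖ - 1| * ‖y‖ = |‖k • y‖ - ‖T y‖| := by
        rw [norm_smul, hT, ← sub_one_mul, abs_mul, abs_norm]
    _ ≤ ‖k • y - T y‖ := abs_norm_sub_norm_le _ _
    _ = ‖g‖ := by rw [hy]

end Isometry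

section Translation

variable {Y : Type*} [NormedAddCommGroup Y] [NormedSpace ℂ Y]

def translateLinf (a : ℝ) : Linf Y →ₗᵢ[ℂ] Linf Y :=
  Lp.compMeasurePreservingₗᵢ ℂ (fun t : ℝ => t + a) (measurePreserving_add_right volume a)

theorem translateLinf_apply (a : ℝ) (g : Linf Y) :
    translateLinf a g = Lp.compMeasurePreserving _ (measurePreserving_add_right volume a) g :=
  rfl

theorem translateLinf_translateLinf (a b : ℝ) (g : Linf Y) :
    translateLinf a (translateLinf b g) = translateLinf (a + b) g := by
  simp only [translateLinf_apply]
  rw [← Lp.compMeasurePreserving_comp_apply]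
  simp only [Function.comp_def, add_assoc, add_comm a b]

theorem translateLinf_zero (g : Linf Y) : translateLinf 0 g = g := by
  simp only [translateLinf_apply, add_zero]
  exact Lp.compMeasurePreserving_id_apply g

def transOpUnit : (Linf Y →L[ℂ] Linf Y)ˣ where
  val := transOp Y
  inv := (translateLinf (-1)).toContinuousLinearMap
  val_inv := ContinuousLinearMap.ext fun g => by
    change translateLinf 1 (translateLinf (-1) g) = g
    rw [translateLinf_translateLinf, add_neg_cancel, translateLinf_zero]
  inv_val := ContinuousLinearMap.ext fun g => by
    change translateLinf (-1) (translateLinf 1 g) = g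
    rw [translateLinf_translateLinf, neg_add_cancel, translateLinf_zero]

theorem coe_transOpUnit :
    ((transOpUnit : (Linf Y →L[ℂ] Linf Y)ˣ) : Linf Y →L[ℂ] Linf Y) = transOp Y :=
  rfl

theorem norm_transOp_apply (g : Linf Y) : ‖transOp Y g‖ = ‖g‖ :=
  (translateLinf 1).norm_map g

theorem spectrum_transOp_subset_sphere [CompleteSpace Y] : spectrum ℂ (transOp Y) ⊆ sphere 0 1 := by
  have := spectrum_subset_sphere_of_isometry (transOpUnit (Y := Y))
    (by rw [coe_transOpUnit]; exact norm_transOp_apply)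
  rwa [coe_transOpUnit] at this

theorem mem_resolventSet_transOp [CompleteSpace Y] {k : ℂ} (hk : ‖k‖ ≠ 1) :
    k ∈ resolventSet ℂ (transOp Y) :=
  spectrum.notMem_iff.mp fun h =>
    hk (mem_sphere_zero_iff_norm.mp (spectrum_transOp_subset_sphere h))

theorem abs_norm_sub_one_mul_norm_resolvent_transOp_le [CompleteSpace Y] {k : ℂ} (hk : ‖k‖ ≠ 1)
    (g : Linf Y) :
    |‖k‖ - 1| * ‖resolvent (transOp Y) k g‖ ≤ ‖g‖ :=
  abs_norm_sub_one_mul_norm_resolvent_le (T := transOp Y) norm_transOp_apply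
    (mem_resolventSet_transOp hk) g

theorem differentiableAt_resolvent_transOp_apply [CompleteSpace Y] (g : Linf Y) {z : ℂ}
    (hz : ‖z‖ ≠ 1) :
    DifferentiableAt ℂ (fun z => resolvent (transOp Y) z g) z := by
  have hd : DifferentiableAt ℂ (resolvent (transOp Y)) z :=
    (spectrum.hasDerivAt_resolvent_const_left
      (mem_resolventSet_transOp (Y := Y) hz)).differentiableAt
  exact (ContinuousLinearMap.apply ℂ (Linf Y) g).differentiableAt.comp z hd

end Translation

theorem Complex.norm_one_add_sq_of_norm_eq_one {v : ℂ} (hv : ‖v‖ = 1) :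
    ‖1 + v ^ 2‖ = 2 * |v.re| := by
  have hconj : v * (starRingEnd ℂ) v = 1 := by
    rw [Complex.mul_conj, Complex.normSq_eq_norm_sq, hv]; norm_num
  have : 1 + v ^ 2 = v * (v + (starRingEnd ℂ) v) := by rw [mul_add, hconj]; ring
  rw [this, norm_mul, hv, one_mul, Complex.add_conj, Complex.norm_real, Real.norm_eq_abs, abs_mul,
    abs_two]

theorem Real.abs_div_one_add_abs_le_abs_exp_sub_one (x : ℝ) : |x| / (1 + |x|) ≤ |exp x - 1| := by
  rcases le_or_gt 0 x with hx | hx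
  · rw [abs_of_nonneg hx, abs_of_nonneg (by linarith [add_one_le_exp x])]
    calc x / (1 + x) ≤ x := div_le_self hx (by linarith)
      _ ≤ exp x - 1 := by linarith [add_one_le_exp x]
  · have hexp : exp x * (1 - x) ≤ 1 := by
      calc exp x * (1 - x) ≤ exp x * exp (-x) := by
            gcongr; linarith [add_one_le_exp (-x)]
        _ = 1 := by rw [← exp_add, add_neg_cancel, exp_zero]
    rw [abs_of_neg hx, abs_of_neg (by linarith [exp_lt_one_iff.mpr hx]), div_le_iff₀ (by linarith)]
    nlinarith

section Holomorphic

variable {E : Type*} [NormedAddCommGroup E] [NormedSpace ℂ E]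

theorem norm_le_of_norm_le_div_abs_re {F : ℂ → E} {δ C : ℝ} (hC : 0 ≤ C)
    (hF : DifferentiableOn ℂ F (ball 0 δ))
    (hFC : ∀ ζ ∈ ball (0 : ℂ) δ, ζ.re ≠ 0 → ‖F ζ‖ ≤ C / |ζ.re|) {w : ℂ} (hw : ‖w‖ < δ / 2) :
    ‖F w‖ ≤ 4 * C / δ := by
  set R := δ / 2
  have hR : 0 < R := (norm_nonneg w).trans_lt hw
  set w' : ℂ := w.im * Complex.I
  have hw're : w'.re = 0 := by simp [w']
  have hww' : w - w' = (w.re : ℂ) := by apply Complex.ext <;> simp [w']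
  have hclosedBall : closedBall w' R ⊆ ball 0 δ := fun ζ hζ => by
    have : ‖w'‖ ≤ ‖w‖ := by simpa [w'] using Complex.abs_im_le_norm w
    rw [mem_ball_zero_iff]
    calc ‖ζ‖ ≤ ‖ζ - w'‖ + ‖w'‖ := norm_le_norm_sub_add ζ w'
      _ < R + R := add_lt_add_of_le_of_lt (mem_closedBall_iff_norm.mp hζ) (this.trans_lt hw)
      _ = δ := by ring
  -- on the circle `‖ζ - w'‖ = R` the weight has modulus `2 |Re ζ| / R`, which cancels the growth
  -- of `F`, while at `w` it is a real number `≥ 1`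
  set φ : ℂ → E := fun ζ => (1 + ((ζ - w') / R) ^ 2) • F ζ
  have hφ : DiffContOnCl ℂ φ (ball w' R) := by
    refine DifferentiableOn.diffContOnCl ?_
    rw [closure_ball w' hR.ne']
    exact (((differentiableOn_id.sub_const _).div_const _).pow 2 |>.const_add 1).smul
      (hF.mono hclosedBall)
  have hφ_frontier : ∀ ζ ∈ frontier (ball w' R), ‖φ ζ‖ ≤ 2 * C / R := by
    intro ζ hζ
    rw [frontier_ball w' hR.ne', mem_sphere_iff_norm] at hζ
    have hv : ‖(ζ - w') / R‖ = 1 := by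
      rw [norm_div, hζ, Complex.norm_real, Real.norm_eq_abs, abs_of_pos hR, div_self hR.ne']
    have hvre : ((ζ - w') / R).re = ζ.re / R := by
      rw [Complex.div_ofReal_re, Complex.sub_re, hw're, sub_zero]
    simp only [φ, norm_smul, Complex.norm_one_add_sq_of_norm_eq_one hv, hvre, abs_div,
      abs_of_pos hR]
    rcases eq_or_ne ζ.re 0 with hre | hre
    · rw [hre]; simp only [abs_zero, zero_div, mul_zero, zero_mul]; positivity
    · have hζδ : ζ ∈ ball (0 : ℂ) δ := hclosedBall (mem_closedBall_iff_norm.mpr hζ.le)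
      calc 2 * (|ζ.re| / R) * ‖F ζ‖ ≤ 2 * (|ζ.re| / R) * (C / |ζ.re|) := by
            gcongr; exact hFC ζ hζδ hre
        _ = 2 * C / R := by field_simp
  have hw_ball : w ∈ ball w' R := by
    rw [mem_ball_iff_norm, hww', Complex.norm_real, Real.norm_eq_abs]
    exact (Complex.abs_re_le_norm w).trans_lt hw
  have hφw : ‖F w‖ ≤ ‖φ w‖ := by
    have : (1 : ℂ) + ((w - w') / R) ^ 2 = ((1 + (w.re / R) ^ 2 : ℝ) : ℂ) := by
      rw [hww']; push_cast; ring
    rw [norm_smul, this, Complex.norm_real, Real.norm_eq_abs, abs_of_pos (by positivity)]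
    exact le_mul_of_one_le_left (norm_nonneg _) (by nlinarith)
  calc ‖F w‖ ≤ ‖φ w‖ := hφw
    _ ≤ 2 * C / R := Complex.norm_le_of_forall_mem_frontier_norm_le isBounded_ball hφ
        hφ_frontier (subset_closure hw_ball)
    _ = 4 * C / δ := by simp only [R]; field_simp; ring

theorem norm_le_of_norm_le_div_abs_norm_sub_one {F : ℂ → E} {ξ₀ : ℂ} (hξ₀ : ‖ξ₀‖ = 1)
    {ρ C : ℝ} (hρ : ρ ≤ 1) (hC : 0 ≤ C) (hF : DifferentiableOn ℂ F (ball ξ₀ ρ))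
    (hFC : ∀ z ∈ ball ξ₀ ρ, ‖z‖ ≠ 1 → ‖F z‖ ≤ C / |‖z‖ - 1|) {w : ℂ} (hw : w ∈ ball ξ₀ (ρ / 6)) :
    ‖F w‖ ≤ 16 * C / ρ := by
  -- in the coordinate `ζ = log (z / ξ₀)` the unit circle becomes the imaginary axis
  have hmaps : Set.MapsTo (fun ζ => ξ₀ * Complex.exp ζ) (ball 0 (ρ / 2)) (ball ξ₀ ρ) := by
    intro ζ hζ
    rw [mem_ball_zero_iff] at hζ
    rw [mem_ball_iff_norm, ← mul_sub_one, norm_mul, hξ₀, one_mul]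
    calc ‖Complex.exp ζ - 1‖ ≤ 2 * ‖ζ‖ := Complex.norm_exp_sub_one_le (by linarith)
      _ < ρ := by linarith
  have hG : DifferentiableOn ℂ (fun ζ => F (ξ₀ * Complex.exp ζ)) (ball 0 (ρ / 2)) :=
    hF.comp (by fun_prop) hmaps
  have hGC : ∀ ζ ∈ ball (0 : ℂ) (ρ / 2), ζ.re ≠ 0 →
      ‖F (ξ₀ * Complex.exp ζ)‖ ≤ 2 * C / |ζ.re| := by
    intro ζ hζ hre
    have hnorm : ‖ξ₀ * Complex.exp ζ‖ = Real.exp ζ.re := by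
      rw [norm_mul, hξ₀, one_mul, Complex.norm_exp]
    have hre_le : |ζ.re| ≤ 1 :=
      (Complex.abs_re_le_norm ζ).trans (by rw [mem_ball_zero_iff] at hζ; linarith)
    have hre_pos : 0 < |ζ.re| := abs_pos.mpr hre
    have hexp := Real.abs_div_one_add_abs_le_abs_exp_sub_one ζ.re
    calc ‖F (ξ₀ * Complex.exp ζ)‖ ≤ C / |Real.exp ζ.re - 1| := by
          rw [← hnorm]
          exact hFC _ (hmaps hζ) (by rw [hnorm]; exact fun h => hre (Real.exp_eq_one_iff _ |>.mp h))
      _ ≤ C / (|ζ.re| / (1 + |ζ.re|)) := by gcongr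
      _ ≤ 2 * C / |ζ.re| := by
          rw [div_div_eq_mul_div, div_le_div_iff_of_pos_right hre_pos]
          nlinarith
  have hξ₀_ne : ξ₀ ≠ 0 := norm_ne_zero_iff.mp (by rw [hξ₀]; exact one_ne_zero)
  have hz : ‖w / ξ₀ - 1‖ < ρ / 6 := by
    rwa [← div_self hξ₀_ne, ← sub_div, norm_div, hξ₀, div_one, ← dist_eq_norm]
  have hz_ne : w / ξ₀ ≠ 0 := fun h => by
    rw [h, zero_sub, norm_neg, norm_one] at hz; linarith
  have hlog : ‖Complex.log (w / ξ₀)‖ < ρ / 2 / 2 := by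
    have := Complex.norm_log_one_add_half_le_self (z := w / ξ₀ - 1) (by linarith)
    rw [add_sub_cancel] at this
    linarith
  have := norm_le_of_norm_le_div_abs_re (by positivity) hG hGC hlog
  rw [Complex.exp_log hz_ne, mul_div_cancel₀ w hξ₀_ne] at this
  exact this.trans_eq (by ring)

theorem exists_differentiableOn_tendsto_of_norm_sub_le {E : Type*} [NormedAddCommGroup E]
    [NormedSpace ℂ E] [CompleteSpace E] {G : Type*} [SeminormedAddCommGroup G]
    {F : ℕ → ℂ → E} {V : Set ℂ} (hV : IsOpen V) (hF : ∀ n, DifferentiableOn ℂ (F n) V)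
    {g : ℕ → G} (hg : CauchySeq g) {K : ℝ} (hK : 0 ≤ K)
    (hFg : ∀ m n, ∀ z ∈ V, ‖F m z - F n z‖ ≤ K * ‖g m - g n‖) :
    ∃ H : ℂ → E, DifferentiableOn ℂ H V ∧ ∀ z ∈ V, Tendsto (F · z) atTop (𝓝 (H z)) := by
  have hunif : UniformCauchySeqOn F atTop V := by
    rw [Metric.uniformCauchySeqOn_iff]
    intro ε hε
    obtain ⟨N, hN⟩ := Metric.cauchySeq_iff.mp hg (ε / (K + 1)) (by positivity)
    refine ⟨N, fun m hm n hn z hz => ?_⟩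
    calc dist (F m z) (F n z) ≤ K * ‖g m - g n‖ := by rw [dist_eq_norm]; exact hFg m n z hz
      _ ≤ K * (ε / (K + 1)) := by rw [← dist_eq_norm]; gcongr; exact (hN m hm n hn).le
      _ < ε := by rw [mul_div_assoc', div_lt_iff₀ (by positivity)]; nlinarith
  have hlim : ∀ z ∈ V, Tendsto (F · z) atTop (𝓝 (limUnder atTop (F · z))) := fun z hz =>
    tendsto_nhds_limUnder (cauchySeq_tendsto_of_complete (hunif.cauchySeq hz))
  refine ⟨fun z => limUnder atTop (F · z), ?_, hlim⟩
  exact (hunif.tendstoUniformlyOn_of_tendsto hlim).tendstoLocallyUniformlyOn.differentiableOn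
    (.of_forall hF) hV

end Holomorphic

section Extension

variable {E : Type*} [TopologicalSpace E] [Nonempty E]

/-- The limit of `φ` from off the unit circle: the continuous extension of `φ` across the circle
where one exists, junk elsewhere. -/
def extendAcrossCircle (φ : ℂ → E) (z : ℂ) : E :=
  limUnder (𝓝[(sphere (0 : ℂ) 1)ᶜ] z) φ

theorem eqOn_extendAcrossCircle [T2Space E] {φ F : ℂ → E} {U : Set ℂ} (hU : IsOpen U)
    (hF : ContinuousOn F U) (hφ : ∀ z ∈ U, ‖z‖ ≠ 1 → F z = φ z) :
    Set.EqOn (extendAcrossCircle φ) F U := by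
  intro z hz
  have : (𝓝[(sphere (0 : ℂ) 1)ᶜ] z).NeBot := by
    rw [← mem_closure_iff_nhdsWithin_neBot, closure_compl, interior_sphere' (0 : ℂ) 1]
    exact Set.notMem_empty z
  refine Tendsto.limUnder_eq ?_
  refine ((hF.continuousAt (hU.mem_nhds hz)).tendsto.mono_left nhdsWithin_le_nhds).congr' ?_
  filter_upwards [inter_mem_nhdsWithin _ (hU.mem_nhds hz)] with y ⟨hy, hyU⟩
  exact hφ y hyU (by simpa using hy)

end Extension

section Spectrum

variable {Y : Type*} [NormedAddCommGroup Y] [NormedSpace ℂ Y] [CompleteSpace Y]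

theorem extendAcrossCircle_resolvent_eqOn (g : Linf Y) :
    Set.EqOn (extendAcrossCircle fun z => resolvent (transOp Y) z g)
      (fun z => resolvent (transOp Y) z g) (sphere 0 1)ᶜ :=
  eqOn_extendAcrossCircle isClosed_sphere.isOpen_compl
    (fun z hz => (differentiableAt_resolvent_transOp_apply g (by simpa using hz)).continuousAt
      |>.continuousWithinAt)
    fun _ _ _ => rfl

theorem differentiableAt_extendAcrossCircle_resolvent {g : Linf Y} {z : ℂ}
    (hz : z ∉ circSpec Y g) :
    DifferentiableAt ℂ (extendAcrossCircle fun z => resolvent (transOp Y) z g) z := by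
  by_cases hz1 : ‖z‖ = 1
  · obtain ⟨U, F, hU, hzU, hF, hFres⟩ := not_not.mp fun h => hz ⟨hz1, h⟩
    exact (hF z hzU).differentiableAt.congr_of_eventuallyEq
      ((eqOn_extendAcrossCircle hU hF.continuousOn hFres).eventuallyEq_of_mem (hU.mem_nhds hzU))
  · exact (differentiableAt_resolvent_transOp_apply g hz1).congr_of_eventuallyEq
      ((extendAcrossCircle_resolvent_eqOn g).eventuallyEq_of_mem
        (isClosed_sphere.isOpen_compl.mem_nhds (by simpa using hz1)))

theorem isSeqClosed_setOf_circSpec_subset {Λ : Set ℂ} (hΛ : IsClosed Λ) :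
    IsSeqClosed {g : Linf Y | circSpec Y g ⊆ Λ} := by
  intro g g₀ hgΛ hg ξ₀ ⟨hξ₀, hnot⟩
  by_contra hξ₀Λ
  obtain ⟨r, hr, hrΛ⟩ := Metric.isOpen_iff.mp hΛ.isOpen_compl ξ₀ hξ₀Λ
  set ρ := min r 1
  have hρ : 0 < ρ := lt_min hr one_pos
  set F := fun n => extendAcrossCircle fun z => resolvent (transOp Y) z (g n)
  have hF : ∀ n, DifferentiableOn ℂ (F n) (ball ξ₀ ρ) := fun n z hz =>
    (differentiableAt_extendAcrossCircle_resolvent fun hzg =>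
      hrΛ (ball_subset_ball (min_le_left _ _) hz) (hgΛ n hzg)).differentiableWithinAt
  have hF_eq : ∀ n, ∀ z, ‖z‖ ≠ 1 → F n z = resolvent (transOp Y) z (g n) := fun n z hz =>
    extendAcrossCircle_resolvent_eqOn (g n) (by simpa using hz)
  have hFg : ∀ m n, ∀ w ∈ ball ξ₀ (ρ / 6), ‖F m w - F n w‖ ≤ 16 / ρ * ‖g m - g n‖ := by
    intro m n w hw
    refine (norm_le_of_norm_le_div_abs_norm_sub_one hξ₀ (min_le_right _ _) (norm_nonneg _)
      ((hF m).sub (hF n)) (fun z _ hz => ?_) hw).trans_eq (by ring)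
    rw [Pi.sub_apply, hF_eq m z hz, hF_eq n z hz, ← map_sub,
      le_div_iff₀ (abs_pos.mpr (sub_ne_zero.mpr hz)), mul_comm]
    exact abs_norm_sub_one_mul_norm_resolvent_transOp_le hz _
  obtain ⟨H, hH, hFH⟩ := exists_differentiableOn_tendsto_of_norm_sub_le isOpen_ball
    (fun n => (hF n).mono (ball_subset_ball (by linarith))) hg.cauchySeq (by positivity) hFg
  refine hnot ⟨ball ξ₀ (ρ / 6), H, isOpen_ball, mem_ball_self (by positivity),
    hH.analyticOnNhd isOpen_ball, fun z hz hz1 => tendsto_nhds_unique (hFH z hz) ?_⟩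
  simp only [hF_eq _ z hz1]
  exact ((resolvent (transOp Y) z).continuous.tendsto g₀).comp hg

end Spectrum

theorem lipschitzWith_bcToLinf {Y : Type*} [NormedAddCommGroup Y] :
    LipschitzWith 1 (bcToLinf Y) := fun a b => by
  rw [ENNReal.coe_one, one_mul, bcToLinf, bcToLinf, Lp.edist_toLp_toLp, eLpNorm_exponent_top,
    edist_dist]
  exact eLpNormEssSup_le_of_ae_bound
    (ae_of_all _ fun t => by simpa [dist_eq_norm] using a.dist_coe_le_dist t)

theorem tendsto_clm_apply_of_norm_le {𝕜 E F α : Type*} [NontriviallyNormedField 𝕜]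
    [NormedAddCommGroup E] [NormedSpace 𝕜 E] [NormedAddCommGroup F] [NormedSpace 𝕜 F]
    {l : Filter α} {A : α → E →L[𝕜] F} {x : α → E} {x₀ : E} {y : F} {C : ℝ}
    (hA : ∀ᶠ a in l, ‖A a‖ ≤ C) (hAx₀ : Tendsto (fun a => A a x₀) l (𝓝 y))
    (hx : Tendsto x l (𝓝 x₀)) : Tendsto (fun a => A a (x a)) l (𝓝 y) := by
  have hsmall : Tendsto (fun a => A a (x a - x₀)) l (𝓝 0) := by
    refine squeeze_zero_norm' (hA.mono fun a ha => (A a).le_of_opNorm_le ha _) ?_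
    simpa using (tendsto_iff_norm_sub_tendsto_zero.mp hx).const_mul C
  simpa using hAx₀.add hsmall

namespace EvolProcess

variable {Y : Type*} [NormedAddCommGroup Y] [NormedSpace ℂ Y] (P : EvolProcess Y)

theorem exists_norm_le (a t : ℝ) : ∃ C, ∀ ξ ∈ Set.Icc a t, ‖P.U t ξ‖ ≤ C := by
  obtain ⟨N, ω, hN, hω, hbound⟩ := P.bound
  refine ⟨N * Real.exp (ω * (t - a)), fun ξ hξ => (hbound t ξ hξ.2).trans ?_⟩
  gcongr
  exact hξ.1

theorem continuousOn_apply (t : ℝ) {h : ℝ → Y} (hh : Continuous h) :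
    ContinuousOn (fun ξ => P.U t ξ (h ξ)) (Set.Iic t) := by
  intro ξ₀ hξ₀
  obtain ⟨C, hC⟩ := P.exists_norm_le (ξ₀ - 1) t
  have hnear : Set.Icc (ξ₀ - 1) t ∈ 𝓝[Set.Iic t] ξ₀ :=
    mem_nhdsWithin.mpr ⟨Set.Ioi (ξ₀ - 1), isOpen_Ioi, by simp, fun ξ hξ => ⟨hξ.1.le, hξ.2⟩⟩
  have hstrong : ContinuousWithinAt (fun ξ => P.U t ξ (h ξ₀)) (Set.Iic t) ξ₀ :=
    (P.strongCont (h ξ₀) (t, ξ₀) hξ₀).comp (by fun_prop) fun ξ hξ => hξ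
  exact tendsto_clm_apply_of_norm_le (eventually_of_mem hnear hC) hstrong hh.continuousWithinAt

theorem continuous_integral_apply {s t : ℝ} (hst : s ≤ t) :
    Continuous fun f : ℝ →ᵇ Y => ∫ ξ in s..t, P.U t ξ (f ξ) := by
  obtain ⟨C, hC⟩ := P.exists_norm_le s t
  have hC₀ : 0 ≤ C := (norm_nonneg _).trans (hC t ⟨hst, le_rfl⟩)
  have hint : ∀ f : ℝ →ᵇ Y, IntervalIntegrable (fun ξ => P.U t ξ (f ξ)) volume s t := fun f =>
    ((P.continuousOn_apply t f.continuous).mono Set.Icc_subset_Iic_self).intervalIntegrable_of_Icc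
      hst
  refine (LipschitzWith.of_dist_le' (K := C * (t - s)) fun f g => ?_).continuous
  rw [dist_eq_norm, ← intervalIntegral.integral_sub (hint f) (hint g)]
  calc ‖∫ ξ in s..t, (P.U t ξ (f ξ) - P.U t ξ (g ξ))‖ ≤ C * dist f g * |t - s| := by
        refine intervalIntegral.norm_integral_le_of_norm_le_const fun ξ hξ => ?_
        rw [Set.uIoc_of_le hst] at hξ
        rw [← map_sub]
        refine (P.U t ξ).le_of_opNorm_le (hC ξ ⟨hξ.1.le, hξ.2⟩) _ |>.trans ?_
        rw [← dist_eq_norm]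
        exact mul_le_mul_of_nonneg_left (f.dist_coe_le_dist ξ) hC₀
    _ = C * (t - s) * dist f g := by rw [abs_of_nonneg (sub_nonneg.mpr hst)]; ring

def IsMildSolution (u f : ℝ → Y) : Prop :=
  ∀ s t, s ≤ t → u t = P.U t s (u s) + ∫ ξ in s..t, P.U t ξ (f ξ)

theorem isClosed_setOf_isMildSolution :
    IsClosed {p : (ℝ →ᵇ Y) × (ℝ →ᵇ Y) | P.IsMildSolution p.1 p.2} := by
  simp only [IsMildSolution, Set.ofPred_forall]
  refine isClosed_iInter fun s => isClosed_iInter fun t => isClosed_iInter fun hst => ?_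
  exact isClosed_eq ((continuous_eval_const t).comp continuous_fst)
    (((P.U t s).continuous.comp ((continuous_eval_const s).comp continuous_fst)).add
      ((P.continuous_integral_apply hst).comp continuous_snd))

end EvolProcess

theorem stmt18 (E : EvolProcess X) (Λ : Set ℂ) (hΛclosed : IsClosed Λ)
    (u f : ℕ → ℝ →ᵇ X) (ulim flim : ℝ →ᵇ X)
    (huspec : ∀ n : ℕ, circSpec X (bcToLinf X (u n)) ⊆ Λ)
    (hfspec : ∀ n : ℕ, circSpec X (bcToLinf X (f n)) ⊆ Λ)
    (hmild : ∀ (n : ℕ) (s t : ℝ), s ≤ t →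
      u n t = E.U t s (u n s) + ∫ ξ in s..t, E.U t ξ (f n ξ))
    (huconv : Filter.Tendsto u Filter.atTop (nhds ulim))
    (hfconv : Filter.Tendsto f Filter.atTop (nhds flim)) :
    circSpec X (bcToLinf X ulim) ⊆ Λ ∧ circSpec X (bcToLinf X flim) ⊆ Λ ∧
      ∀ s t : ℝ, s ≤ t → ulim t = E.U t s (ulim s) + ∫ ξ in s..t, E.U t ξ (flim ξ) := by
  have hspec : IsClosed {g : ℝ →ᵇ X | circSpec X (bcToLinf X g) ⊆ Λ} :=
    (isSeqClosed_setOf_circSpec_subset hΛclosed).isClosed.preimage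
      (lipschitzWith_bcToLinf (Y := X)).continuous
  exact ⟨hspec.mem_of_tendsto huconv (.of_forall huspec),
    hspec.mem_of_tendsto hfconv (.of_forall hfspec),
    E.isClosed_setOf_isMildSolution.mem_of_tendsto (huconv.prodMk_nhds hfconv)
      (.of_forall hmild)⟩

end
end
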